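/- arXiv:2310.04789 — 4 statements merged into one kernel-verified Lean document; each statement's English description precedes it below -/
import Mathlib

section
/- Let a < b be real numbers, let m be a natural number, and let f : ℝ → ℝ be (2m+2)-times continuously differentiable on [a,b]. Let P be a real polynomial of degree at most 2m+1 such that for every j with 0 ≤ j ≤ m, the j-th derivative of P at a equals the j-th derivative of f at a and the j-th derivative of P at b equals the j-th derivative of f at b (i.e., P is the two-point Hermite interpolant of f of order m at a and b). Then for every t ∈ (a,b) there exists ξ ∈ (a,b) such that f(t) − P(t) = (f^{(2m+2)}(ξ) / (2m+2)!) · (t−a)^{m+1} (t−b)^{m+1}. -/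
/-!
Put `W = ((X - a) (X - b))^(m+1)` and choose `K` so that `g = f - P - K W` vanishes at `t`.
Then `g^(k)` vanishes at `a` and `b` for `k ≤ m`, so Rolle's theorem applied to the zeros
`a < t < b` and then to those of the successive derivatives, together with `a` and `b` as long
as they are still zeros, gives `m + 2` zeros of `g^(m+1)` in `(a, b)` and finally a zero `ξ`
of `g^(2m+2) = f^(2m+2) - K (2m+2)!`.
-/

open Set Polynomial

namespace Polynomial

theorem iterate_derivative_natDegree {R : Type*} [Semiring R] (p : R[X]) :
    derivative^[p.natDegree] p = C ((p.natDegree.factorial : R) * p.leadingCoeff) := by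
  ext n
  rw [coeff_iterate_derivative, coeff_C]
  rcases Nat.eq_zero_or_pos n with rfl | hn
  · rw [zero_add, Nat.descFactorial_self, nsmul_eq_mul, if_pos rfl, leadingCoeff]
  · rw [coeff_eq_zero_of_natDegree_lt (by omega), smul_zero, if_neg hn.ne']

theorem iterate_derivative_X_sub_C_mul_X_sub_C_pow {R : Type*} [CommRing R]
    [Nontrivial R] (a b : R) (n : ℕ) :
    derivative^[2 * n] (((X - C a) * (X - C b)) ^ n) = C ((2 * n).factorial : R) := by
  have hmonic := (monic_X_sub_C a).mul (monic_X_sub_C b)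
  have hdeg : (((X - C a) * (X - C b)) ^ n).natDegree = 2 * n := by
    rw [hmonic.natDegree_pow, (monic_X_sub_C a).natDegree_mul (monic_X_sub_C b),
      natDegree_X_sub_C, natDegree_X_sub_C, mul_comm]
  rw [← hdeg, iterate_derivative_natDegree, (hmonic.pow n).leadingCoeff, mul_one]

theorem eval_iterate_derivative_eq_zero_of_pow_dvd {R : Type*} [CommRing R] {p : R[X]} {a : R}
    {n j : ℕ} (hdvd : (X - C a) ^ n ∣ p) (hj : j < n) : (derivative^[j] p).eval a = 0 := by
  have hroot : X - C a ∣ derivative^[j] p :=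
    (dvd_pow_self _ (Nat.sub_ne_zero_of_lt hj)).trans
      (pow_sub_dvd_iterate_derivative_of_pow_dvd j hdvd)
  exact dvd_iff_isRoot.1 hroot

variable {𝕜 : Type*} [NontriviallyNormedField 𝕜]

theorem iteratedDerivWithin_eval (q : 𝕜[X]) {s : Set 𝕜} (hs : UniqueDiffOn 𝕜 s) (n : ℕ)
    {x : 𝕜} (hx : x ∈ s) :
    iteratedDerivWithin n (fun y => q.eval y) s x = (derivative^[n] q).eval x := by
  induction n generalizing q with
  | zero => simp
  | succ n ih =>
    rw [iteratedDerivWithin_succ', Function.iterate_succ_apply, ← ih]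
    exact iteratedDerivWithin_congr (fun y hy => q.derivWithin (hs y hy)) hx

theorem iteratedDeriv_eval (q : 𝕜[X]) (n : ℕ) (x : 𝕜) :
    iteratedDeriv n (fun y => q.eval y) x = (derivative^[n] q).eval x := by
  rw [← iteratedDerivWithin_univ, q.iteratedDerivWithin_eval uniqueDiffOn_univ n (mem_univ x)]

end Polynomial

theorem iteratedDerivWithin_sub_eval {𝕜 : Type*} [NontriviallyNormedField 𝕜] {f : 𝕜 → 𝕜}
    {s : Set 𝕜} {x : 𝕜} {n : ℕ} (hf : ContDiffWithinAt 𝕜 n f s x) (hs : UniqueDiffOn 𝕜 s)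
    (hx : x ∈ s) (q : 𝕜[X]) :
    iteratedDerivWithin n (fun y => f y - q.eval y) s x
      = iteratedDerivWithin n f s x - (derivative^[n] q).eval x := by
  rw [← q.iteratedDerivWithin_eval hs n hx]
  exact iteratedDerivWithin_sub hx hs hf (q.contDiff_aeval n).contDiffWithinAt

section Rolle

variable {a b : ℝ}

theorem exists_finset_derivWithin_Icc_eq_zero {f : ℝ → ℝ} (hf : ContinuousOn f (Icc a b))
    {s : Finset ℝ} (hs : ↑s ⊆ Icc a b) (hzero : ∀ x ∈ s, f x = 0) :
    ∃ u : Finset ℝ, ↑u ⊆ Ioo a b ∧ s.card ≤ u.card + 1 ∧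
      ∀ x ∈ u, derivWithin f (Icc a b) x = 0 := by
  obtain hs0 | ⟨n, hn⟩ := (Nat.eq_zero_or_pos s.card).imp_right Nat.exists_eq_add_one.2
  · exact ⟨∅, by simp, by simp [hs0], by simp⟩
  set x := s.orderEmbOfFin hn
  have hxs (i : Fin (n + 1)) : x i ∈ s := s.orderEmbOfFin_mem hn i
  have hrolle (i : Fin n) : ∃ c ∈ Ioo (x i.castSucc) (x i.succ), deriv f c = 0 :=
    exists_deriv_eq_zero (x.strictMono i.castSucc_lt_succ)
      (hf.mono (Icc_subset_Icc (hs (hxs _)).1 (hs (hxs _)).2))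
      ((hzero _ (hxs _)).trans (hzero _ (hxs _)).symm)
  choose c hc hc0 using hrolle
  have hcI (i : Fin n) : c i ∈ Ioo a b :=
    ⟨(hs (hxs _)).1.trans_lt (hc i).1, (hc i).2.trans_le (hs (hxs _)).2⟩
  have hmono : StrictMono c := fun i j hij =>
    calc c i < x i.succ := (hc i).2
      _ ≤ x j.castSucc := x.monotone (Fin.succ_le_castSucc_iff.2 hij)
      _ < c j := (hc j).1
  refine ⟨Finset.univ.image c, ?_, ?_, ?_⟩
  · simpa [Set.subset_def] using hcI
  · rw [Finset.card_image_of_injective _ hmono.injective, Finset.card_univ, Fintype.card_fin, hn]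
  · simp only [Finset.mem_image, Finset.mem_univ, true_and, forall_exists_index,
      forall_apply_eq_imp_iff]
    intro i
    rw [derivWithin_of_mem_nhds (Icc_mem_nhds (hcI i).1 (hcI i).2), hc0]

theorem exists_iteratedDerivWithin_Icc_eq_zero_of_card_lt (hab : a < b) {g : ℝ → ℝ} {n : ℕ}
    (hg : ContDiffOn ℝ n g (Icc a b)) {s : Finset ℝ} (hs : ↑s ⊆ Ioo a b) (hcard : n < s.card)
    (hzero : ∀ x ∈ s, g x = 0) :
    ∃ ξ ∈ Ioo a b, iteratedDerivWithin n g (Icc a b) ξ = 0 := by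
  induction n generalizing g s with
  | zero =>
    obtain ⟨x, hx⟩ := Finset.card_pos.1 hcard
    exact ⟨x, hs hx, by simpa using hzero x hx⟩
  | succ n ih =>
    obtain ⟨u, hu, hcard_u, hu0⟩ :=
      exists_finset_derivWithin_Icc_eq_zero hg.continuousOn (hs.trans Ioo_subset_Icc_self) hzero
    rw [iteratedDerivWithin_succ']
    exact ih (hg.derivWithin (uniqueDiffOn_Icc hab) (by simp)) hu (by omega) hu0

theorem exists_iteratedDerivWithin_Icc_eq_zero_of_endpoint_zeros (hab : a < b) {g : ℝ → ℝ}
    {p r : ℕ} (hg : ContDiffOn ℝ (2 * p + r : ℕ) g (Icc a b))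
    (ha : ∀ k < p, iteratedDerivWithin k g (Icc a b) a = 0)
    (hb : ∀ k < p, iteratedDerivWithin k g (Icc a b) b = 0)
    {s : Finset ℝ} (hs : ↑s ⊆ Ioo a b) (hcard : r < s.card) (hzero : ∀ x ∈ s, g x = 0) :
    ∃ ξ ∈ Ioo a b, iteratedDerivWithin (2 * p + r) g (Icc a b) ξ = 0 := by
  induction p generalizing g r s with
  | zero =>
    simpa using
      exists_iteratedDerivWithin_Icc_eq_zero_of_card_lt hab (by simpa using hg) hs hcard hzero
  | succ p ih =>
    -- Rolle on the zeros `a < s < b` of `g` gives `s.card + 1` zeros of `g'`, which still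
    -- vanishes to order `p` at `a` and `b`.
    have hs' : ↑(insert a (insert b s)) ⊆ Icc a b := by
      simp only [Finset.coe_insert, insert_subset_iff]
      exact ⟨left_mem_Icc.2 hab.le, right_mem_Icc.2 hab.le, hs.trans Ioo_subset_Icc_self⟩
    have hcard_insert : (insert a (insert b s)).card = s.card + 2 := by
      rw [Finset.card_insert_of_notMem, Finset.card_insert_of_notMem]
      · exact fun h => (hs h).2.false
      · simp only [Finset.mem_insert, not_or]
        exact ⟨hab.ne, fun h => (hs h).1.false⟩
    obtain ⟨u, hu, hcard_u, hu0⟩ := exists_finset_derivWithin_Icc_eq_zero hg.continuousOn hs'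
      (by
        have hga : g a = 0 := by simpa using ha 0 p.succ_pos
        have hgb : g b = 0 := by simpa using hb 0 p.succ_pos
        simpa [hga, hgb] using hzero)
    have hg' : ContDiffOn ℝ (2 * p + (r + 1) : ℕ) (derivWithin g (Icc a b)) (Icc a b) :=
      hg.derivWithin (uniqueDiffOn_Icc hab) (by norm_cast; omega)
    have := ih (r := r + 1) hg'
      (fun k hk => by rw [← iteratedDerivWithin_succ']; exact ha (k + 1) (by omega))
      (fun k hk => by rw [← iteratedDerivWithin_succ']; exact hb (k + 1) (by omega))
      hu (by omega) hu0
    rwa [← iteratedDerivWithin_succ', show 2 * p + (r + 1) + 1 = 2 * (p + 1) + r by ring] at this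

end Rolle

theorem exists_iteratedDerivWithin_Icc_eq_of_hermite_interpolates {a b : ℝ} (hab : a < b)
    {f : ℝ → ℝ} {p : ℕ} (hf : ContDiffOn ℝ (2 * p : ℕ) f (Icc a b)) (Q : ℝ[X])
    (ha : ∀ k < p, iteratedDerivWithin k f (Icc a b) a = (derivative^[k] Q).eval a)
    (hb : ∀ k < p, iteratedDerivWithin k f (Icc a b) b = (derivative^[k] Q).eval b)
    {t : ℝ} (ht : t ∈ Ioo a b) (hft : f t = Q.eval t) :
    ∃ ξ ∈ Ioo a b, iteratedDerivWithin (2 * p) f (Icc a b) ξ = (derivative^[2 * p] Q).eval ξ := by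
  have hderiv : ∀ k ≤ 2 * p, ∀ x ∈ Icc a b,
      iteratedDerivWithin k (fun y => f y - Q.eval y) (Icc a b) x
        = iteratedDerivWithin k f (Icc a b) x - (derivative^[k] Q).eval x := fun k hk x hx =>
    iteratedDerivWithin_sub_eval ((hf x hx).of_le (by exact_mod_cast hk)) (uniqueDiffOn_Icc hab)
      hx Q
  obtain ⟨ξ, hξ, hξ0⟩ := exists_iteratedDerivWithin_Icc_eq_zero_of_endpoint_zeros hab
    (g := fun y => f y - Q.eval y) (r := 0) (s := {t})
    (hf.sub (Q.contDiff_aeval _).contDiffOn)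
    (fun k hk => by rw [hderiv k (by omega) a (left_mem_Icc.2 hab.le), ha k hk, sub_self])
    (fun k hk => by rw [hderiv k (by omega) b (right_mem_Icc.2 hab.le), hb k hk, sub_self])
    (by simpa using ht) (by simp) (by simp [hft])
  refine ⟨ξ, hξ, sub_eq_zero.1 ?_⟩
  rw [← hderiv _ le_rfl ξ (Ioo_subset_Icc_self hξ)]
  exact hξ0

/-- Two-point Hermite interpolation error formula: if `P` is the Hermite interpolant of `f`
of order `m` at the nodes `a < b` (matching derivatives of orders `0..m` at both), and `f`
is `(2m+2)`-times continuously differentiable on `[a,b]`, then for each `t ∈ (a,b)` there is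
`ξ ∈ (a,b)` with `f t - P t = f^{(2m+2)}(ξ)/(2m+2)! * (t-a)^{m+1} (t-b)^{m+1}`. -/
theorem stmt_0 (a b : ℝ) (hab : a < b) (m : ℕ) (f : ℝ → ℝ)
    (hf : ContDiffOn ℝ (2*m+2 : ℕ) f (Set.Icc a b))
    (P : Polynomial ℝ) (hdeg : P.degree ≤ (2*m+1 : ℕ))
    (hPa : ∀ j ≤ m, iteratedDeriv j (fun x => P.eval x) a
      = iteratedDerivWithin j f (Set.Icc a b) a)
    (hPb : ∀ j ≤ m, iteratedDeriv j (fun x => P.eval x) b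
      = iteratedDerivWithin j f (Set.Icc a b) b) :
    ∀ t ∈ Set.Ioo a b, ∃ ξ ∈ Set.Ioo a b,
      f t - P.eval t =
        iteratedDerivWithin (2*m+2) f (Set.Icc a b) ξ / (Nat.factorial (2*m+2) : ℝ)
          * (t - a) ^ (m+1) * (t - b) ^ (m+1) := by
  intro t ht
  set W : ℝ[X] := ((X - C a) * (X - C b)) ^ (m + 1)
  have hWeval (x : ℝ) : W.eval x = (x - a) ^ (m + 1) * (x - b) ^ (m + 1) := by
    simp [W, mul_pow]
  have hWt : W.eval t ≠ 0 := by
    rw [hWeval]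
    exact mul_ne_zero (pow_ne_zero _ (sub_ne_zero.2 ht.1.ne'))
      (pow_ne_zero _ (sub_ne_zero.2 ht.2.ne))
  set K := (f t - P.eval t) / W.eval t
  have hQ (k : ℕ) :
      derivative^[k] (P + C K * W) = derivative^[k] P + C K * derivative^[k] W := by
    simp [iterate_derivative_C_mul]
  have hinterp {c : ℝ} (hc : (X - C c) ^ (m + 1) ∣ W)
      (hPc : ∀ j ≤ m, iteratedDeriv j (fun x => P.eval x) c = iteratedDerivWithin j f (Icc a b) c)
      (k : ℕ) (hk : k < m + 1) :
      iteratedDerivWithin k f (Icc a b) c = (derivative^[k] (P + C K * W)).eval c := by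
    rw [hQ, eval_add, eval_mul, eval_iterate_derivative_eq_zero_of_pow_dvd hc hk, mul_zero,
      add_zero, ← iteratedDeriv_eval, hPc k (by omega)]
  rw [show 2 * m + 2 = 2 * (m + 1) by ring] at hf ⊢
  obtain ⟨ξ, hξ, hξeq⟩ := exists_iteratedDerivWithin_Icc_eq_of_hermite_interpolates hab hf
    (P + C K * W) (hinterp ⟨_, mul_pow _ _ _⟩ hPa)
    (hinterp ⟨_, (mul_pow _ _ _).trans (mul_comm _ _)⟩ hPb) ht
    (by simp [K, div_mul_cancel₀ _ hWt])
  have hP_top : derivative^[2 * (m + 1)] P = 0 :=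
    iterate_derivative_eq_zero_of_degree_lt (hdeg.trans_lt (by norm_cast; omega))
  refine ⟨ξ, hξ, ?_⟩
  rw [hξeq, hQ, hP_top, iterate_derivative_X_sub_C_mul_X_sub_C_pow, zero_add, eval_mul, eval_C,
    eval_C, mul_div_cancel_right₀ _ (by positivity), mul_assoc, ← hWeval, div_mul_cancel₀ _ hWt]
end

section
/- Let a ≠ b be real numbers, let m be a natural number, and let v_0,…,v_m and w_0,…,w_m be arbitrary real numbers. Then there exists a unique real polynomial P of degree at most 2m+1 such that for every j with 0 ≤ j ≤ m, the j-th derivative of P at a equals v_j and the j-th derivative of P at b equals w_j. -/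
open Polynomial

lemma iteratedDeriv_polyEval (P : Polynomial ℝ) (n : ℕ) :
    iteratedDeriv n (fun x => P.eval x) = fun x => (Polynomial.derivative^[n] P).eval x := by
  induction n with
  | zero => simp
  | succ n ih =>
    rw [iteratedDeriv_succ, ih]
    funext x
    rw [Function.iterate_succ_apply']
    exact Polynomial.deriv _

/-- The evaluation map sending a polynomial of degree < 2m+2 to its derivatives of order ≤ m
at `a` and at `b`. -/
noncomputable def hermiteMap (a b : ℝ) (m : ℕ) :
    Polynomial.degreeLT ℝ (2*m+2) →ₗ[ℝ] (Fin (m+1) → ℝ) × (Fin (m+1) → ℝ) where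
  toFun P := (fun j => (Polynomial.derivative^[(j : ℕ)] (P : ℝ[X])).eval a,
              fun j => (Polynomial.derivative^[(j : ℕ)] (P : ℝ[X])).eval b)
  map_add' P Q := by
    ext j <;> simp [iterate_map_add]
  map_smul' c P := by
    ext j <;> simp [Polynomial.iterate_derivative_smul]

lemma hermiteMap_injective (a b : ℝ) (hab : a ≠ b) (m : ℕ) :
    Function.Injective (hermiteMap a b m) := by
  rw [← LinearMap.ker_eq_bot, LinearMap.ker_eq_bot']
  rintro ⟨P, hP⟩ h
  rw [Prod.ext_iff] at h
  obtain ⟨ha, hb⟩ := h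
  rw [Submodule.mk_eq_zero]
  by_contra hP0
  have key : ∀ t : ℝ, (∀ j ≤ m, (Polynomial.derivative^[j] P).IsRoot t) →
      (X - C t) ^ (m+1) ∣ P := by
    intro t ht
    have : m < P.rootMultiplicity t :=
      (Polynomial.lt_rootMultiplicity_iff_isRoot_iterate_derivative hP0).mpr ht
    exact dvd_trans (pow_dvd_pow _ this) (Polynomial.pow_rootMultiplicity_dvd P t)
  have hfa : ∀ j ≤ m, (Polynomial.derivative^[j] P).IsRoot a := by
    intro j hj
    have := congrFun ha ⟨j, Nat.lt_succ_of_le hj⟩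
    simpa [hermiteMap] using this
  have hfb : ∀ j ≤ m, (Polynomial.derivative^[j] P).IsRoot b := by
    intro j hj
    have := congrFun hb ⟨j, Nat.lt_succ_of_le hj⟩
    simpa [hermiteMap] using this
  have hda := key a hfa
  have hdb := key b hfb
  have hcop : IsCoprime ((X - C a) ^ (m+1)) ((X - C b) ^ (m+1)) :=
    (Polynomial.isCoprime_X_sub_C_of_isUnit_sub (by simpa using sub_ne_zero.mpr hab)).pow
  have hdvd : (X - C a) ^ (m+1) * (X - C b) ^ (m+1) ∣ P := hcop.mul_dvd hda hdb
  have hdeg := Polynomial.degree_le_of_dvd hdvd hP0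
  have : ((X - C a) ^ (m+1) * (X - C b) ^ (m+1) : ℝ[X]).degree = (2*m+2 : ℕ) := by
    simp only [Polynomial.degree_mul, Polynomial.degree_pow, Polynomial.degree_X_sub_C]
    push_cast
    ring
  rw [this] at hdeg
  have := Polynomial.mem_degreeLT.mp hP
  exact absurd (lt_of_le_of_lt hdeg this) (lt_irrefl _)

lemma hermiteMap_surjective (a b : ℝ) (hab : a ≠ b) (m : ℕ) :
    Function.Surjective (hermiteMap a b m) := by
  have e := Polynomial.degreeLTEquiv ℝ (2*m+2)
  have : FiniteDimensional ℝ (Polynomial.degreeLT ℝ (2*m+2)) := e.symm.finiteDimensional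
  have hfr : Module.finrank ℝ (Polynomial.degreeLT ℝ (2*m+2)) =
      Module.finrank ℝ ((Fin (m+1) → ℝ) × (Fin (m+1) → ℝ)) := by
    rw [e.finrank_eq]
    simp [Module.finrank_prod]
    ring
  exact (LinearMap.injective_iff_surjective_of_finrank_eq_finrank hfr).mp
    (hermiteMap_injective a b hab m)

/-- Existence and uniqueness of the two-point Hermite interpolation polynomial of degree at
most `2m+1` matching prescribed values of derivatives of orders `0..m` at two distinct
nodes `a ≠ b`. -/
theorem stmt_1 (a b : ℝ) (hab : a ≠ b) (m : ℕ) (v w : ℕ → ℝ) :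
    ∃! P : Polynomial ℝ, P.degree ≤ (2*m+1 : ℕ) ∧
      (∀ j ≤ m, iteratedDeriv j (fun x => P.eval x) a = v j) ∧
      (∀ j ≤ m, iteratedDeriv j (fun x => P.eval x) b = w j) := by
  have hlt : ∀ Q : ℝ[X], Q.degree ≤ (2*m+1 : ℕ) → Q ∈ Polynomial.degreeLT ℝ (2*m+2) := by
    intro Q hQ
    rw [show 2*m+2 = (2*m+1)+1 by ring, Polynomial.degreeLT_succ_eq_degreeLE]
    exact Polynomial.mem_degreeLE.mpr hQ
  obtain ⟨P, hP⟩ := hermiteMap_surjective a b hab m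
    (fun j => v j, fun j => w j)
  rw [Prod.ext_iff] at hP
  obtain ⟨hPa, hPb⟩ := hP
  refine ⟨(P : ℝ[X]), ⟨?_, ?_, ?_⟩, ?_⟩
  · refine Polynomial.mem_degreeLE.mp ?_
    rw [← Polynomial.degreeLT_succ_eq_degreeLE]
    exact P.2
  · intro j hj
    rw [iteratedDeriv_polyEval]
    have := congrFun hPa ⟨j, Nat.lt_succ_of_le hj⟩
    simpa [hermiteMap] using this
  · intro j hj
    rw [iteratedDeriv_polyEval]
    have := congrFun hPb ⟨j, Nat.lt_succ_of_le hj⟩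
    simpa [hermiteMap] using this
  · rintro Q ⟨hQdeg, hQa, hQb⟩
    have hmem : Q - (P : ℝ[X]) ∈ Polynomial.degreeLT ℝ (2*m+2) := by
      apply hlt
      refine le_trans (Polynomial.degree_sub_le _ _) ?_
      have hP' : (P : ℝ[X]).degree ≤ (2*m+1 : ℕ) := by
        refine Polynomial.mem_degreeLE.mp ?_
        rw [← Polynomial.degreeLT_succ_eq_degreeLE]
        exact P.2
      exact max_le hQdeg hP'
    have hzero : hermiteMap a b m ⟨Q - P, hmem⟩ = 0 := by
      have hva : ∀ j ≤ m, (Polynomial.derivative^[j] (Q : ℝ[X])).eval a = v j := by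
        intro j hj
        have := hQa j hj
        rwa [iteratedDeriv_polyEval] at this
      have hvb : ∀ j ≤ m, (Polynomial.derivative^[j] (Q : ℝ[X])).eval b = w j := by
        intro j hj
        have := hQb j hj
        rwa [iteratedDeriv_polyEval] at this
      have hpa : ∀ j ≤ m, (Polynomial.derivative^[j] ((P : ℝ[X]))).eval a = v j := by
        intro j hj
        have := congrFun hPa ⟨j, Nat.lt_succ_of_le hj⟩
        simpa [hermiteMap] using this
      have hpb : ∀ j ≤ m, (Polynomial.derivative^[j] ((P : ℝ[X]))).eval b = w j := by
        intro j hj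
        have := congrFun hPb ⟨j, Nat.lt_succ_of_le hj⟩
        simpa [hermiteMap] using this
      apply Prod.ext <;> funext j <;>
        simp only [hermiteMap, LinearMap.coe_mk, AddHom.coe_mk, iterate_map_sub,
          Polynomial.eval_sub]
      · rw [hva j (Nat.lt_succ_iff.mp j.2), hpa j (Nat.lt_succ_iff.mp j.2)]; simp
      · rw [hvb j (Nat.lt_succ_iff.mp j.2), hpb j (Nat.lt_succ_iff.mp j.2)]; simp
    have := hermiteMap_injective a b hab m (a₁ := ⟨Q - P, hmem⟩) (a₂ := 0) (by simpa using hzero)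
    have h0 : (Q : ℝ[X]) - P = 0 := by
      simpa using congrArg Subtype.val this
    exact sub_eq_zero.mp h0
end

section
/- Let α ∈ (0,1), let m be a natural number, set p = 2m+1, let Δt > 0, set t_k = kΔt for k ≥ 0, and let n ≥ 2 be an integer. Then Σ_{k=1}^{n−1} ∫_{t_{k−1}}^{t_k} (t − t_{k−1})^{m+1} (t_k − t)^{m+1} · α (t_n − t)^{−α−1} dt ≤ (Δt^{p+1} / 2^{p+1}) · (Δt^{−α} − t_n^{−α}) ≤ (1 / 2^{p+1}) · Δt^{p+1−α}. -/
/-!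
On each cell `[t_{k-1}, t_k]` the factor `((t - t_{k-1}) (t_k - t))^(m+1)` is at most
`(Δt/2)^(2m+2)` by AM-GM, so the sum is bounded by that constant times the integral of the
nonnegative kernel `α (t_n - t)^(-α-1)` over `[t_0, t_{n-1}]`, whose antiderivative is
`(t_n - t)^(-α)`. Dropping `t_n^(-α) ≥ 0` gives the second bound.
-/

open Set intervalIntegral

lemma sub_mul_sub_le_sq_half_sub (a b x : ℝ) : (x - a) * (b - x) ≤ ((b - a) / 2) ^ 2 := by
  nlinarith [sq_nonneg (a + b - 2 * x)]

lemma sub_pow_mul_sub_pow_le {a b x : ℝ} (hx : x ∈ Icc a b) (k : ℕ) :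
    (x - a) ^ k * (b - x) ^ k ≤ ((b - a) / 2) ^ (2 * k) := by
  rw [← mul_pow, pow_mul]
  exact pow_le_pow_left₀ (mul_nonneg (sub_nonneg.2 hx.1) (sub_nonneg.2 hx.2))
    (sub_mul_sub_le_sq_half_sub a b x) k

lemma continuousOn_const_mul_sub_rpow (α β c : ℝ) :
    ContinuousOn (fun x => α * (c - x) ^ β) (Iio c) :=
  continuousOn_const.mul <| (continuousOn_const.sub continuousOn_id).rpow_const
    fun _ hx => Or.inl (sub_pos.2 hx).ne'

lemma integral_mul_sub_rpow_neg_sub_one (α : ℝ) {a b c : ℝ} (hab : a ≤ b) (hbc : b < c) :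
    ∫ x in a..b, α * (c - x) ^ (-α - 1) = (c - b) ^ (-α) - (c - a) ^ (-α) := by
  have hlt : ∀ x ∈ uIcc a b, x < c := fun x hx => by
    rw [uIcc_of_le hab] at hx
    exact hx.2.trans_lt hbc
  rw [integral_eq_sub_of_hasDerivAt (f := fun x => (c - x) ^ (-α))]
  · intro x hx
    simpa using ((hasDerivAt_id x).const_sub c).rpow_const (p := -α)
      (Or.inl (sub_pos.2 (hlt x hx)).ne')
  · exact ((continuousOn_const_mul_sub_rpow α _ c).mono hlt).intervalIntegrable

lemma sum_integral_mul_le_mul_integral {t : ℕ → ℝ} (ht : Monotone t) {N : ℕ} {f : ℝ → ℝ}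
    {g : ℕ → ℝ → ℝ} {C : ℝ} (hf : ContinuousOn f (Icc (t 0) (t N)))
    (hf₀ : ∀ x ∈ Icc (t 0) (t N), 0 ≤ f x)
    (hg : ∀ k < N, ContinuousOn (g k) (Icc (t k) (t (k + 1))))
    (hgC : ∀ k < N, ∀ x ∈ Icc (t k) (t (k + 1)), g k x ≤ C) :
    ∑ k ∈ Finset.range N, ∫ x in t k..t (k + 1), g k x * f x ≤ C * ∫ x in t 0..t N, f x := by
  have hsub : ∀ k < N, Icc (t k) (t (k + 1)) ⊆ Icc (t 0) (t N) := fun k hk =>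
    Icc_subset_Icc (ht (Nat.zero_le k)) (ht hk)
  have hf' : ∀ k < N, ContinuousOn f (Icc (t k) (t (k + 1))) := fun k hk => hf.mono (hsub k hk)
  have hint : ∀ k < N,
      IntervalIntegrable (fun x => C * f x) MeasureTheory.volume (t k) (t (k + 1)) :=
    fun k hk => ((hf' k hk).intervalIntegrable_of_Icc (ht k.le_succ)).const_mul C
  calc ∑ k ∈ Finset.range N, ∫ x in t k..t (k + 1), g k x * f x
      ≤ ∑ k ∈ Finset.range N, ∫ x in t k..t (k + 1), C * f x := by
        refine Finset.sum_le_sum fun k hk => ?_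
        rw [Finset.mem_range] at hk
        refine integral_mono_on (ht k.le_succ)
          (((hg k hk).mul (hf' k hk)).intervalIntegrable_of_Icc (ht k.le_succ)) (hint k hk)
          fun x hx => ?_
        exact mul_le_mul_of_nonneg_right (hgC k hk x hx) (hf₀ x (hsub k hk hx))
    _ = C * ∫ x in t 0..t N, f x := by
        rw [sum_integral_adjacent_intervals hint, integral_const_mul]

/-- Bound for the contribution of the interior grid intervals in the error analysis of the
Hermite interpolation explicit approximation of the Caputo fractional derivative. -/
theorem stmt_3 (α : ℝ) (hα : α ∈ Set.Ioo (0:ℝ) 1) (m p : ℕ) (hp : p = 2*m+1)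
    (Δt : ℝ) (hΔt : 0 < Δt) (tk : ℕ → ℝ) (htk : ∀ k, tk k = k * Δt)
    (n : ℕ) (hn : 2 ≤ n) :
    (∑ k ∈ Finset.Icc 1 (n-1), ∫ t in (tk (k-1))..(tk k),
        (t - tk (k-1)) ^ (m+1) * (tk k - t) ^ (m+1) * (α * (tk n - t) ^ (-α-1)))
      ≤ Δt ^ (p+1) / 2 ^ (p+1) * (Δt ^ (-α) - (tk n) ^ (-α)) ∧
    Δt ^ (p+1) / 2 ^ (p+1) * (Δt ^ (-α) - (tk n) ^ (-α))
      ≤ (1 / 2 ^ (p+1)) * Δt ^ ((p:ℝ)+1-α) := by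
  have htk_mono : Monotone tk := fun i j hij => by
    simp only [htk]; gcongr
  have htk_succ : ∀ k, tk (k + 1) - tk k = Δt := fun k => by simp only [htk]; push_cast; ring
  have hn' : n - 1 + 1 = n := by omega
  have hlast : tk n - tk (n - 1) = Δt := by simpa [hn'] using htk_succ (n - 1)
  have hweight : (Δt / 2) ^ (p + 1) = Δt ^ (p + 1) / 2 ^ (p + 1) := div_pow ..
  constructor
  · rw [← Finset.Ico_add_one_right_eq_Icc, Finset.sum_Ico_eq_sum_range, hn', ← hweight]
    simp only [add_comm 1, add_tsub_cancel_right]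
    have hgrid : tk (n - 1) < tk n := by linarith
    calc _ ≤ (Δt / 2) ^ (p + 1) * ∫ t in tk 0..tk (n - 1), α * (tk n - t) ^ (-α - 1) := by
          refine sum_integral_mul_le_mul_integral htk_mono ?_ ?_ (fun k _ => by fun_prop) ?_
          · exact (continuousOn_const_mul_sub_rpow α _ _).mono fun x hx => hx.2.trans_lt hgrid
          · exact fun x hx => mul_nonneg hα.1.le (Real.rpow_nonneg (by linarith [hx.2]) _)
          · intro k _ x hx
            simpa [hp, htk_succ, show 2 * m + 1 + 1 = 2 * (m + 1) by ring]
              using sub_pow_mul_sub_pow_le hx (m + 1)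
      _ = (Δt / 2) ^ (p + 1) * (Δt ^ (-α) - tk n ^ (-α)) := by
          rw [integral_mul_sub_rpow_neg_sub_one α (htk_mono (Nat.zero_le _)) hgrid, hlast,
            htk 0, Nat.cast_zero, zero_mul, sub_zero]
  · have htn : 0 ≤ tk n ^ (-α) := Real.rpow_nonneg (by rw [htk]; positivity) _
    calc Δt ^ (p+1) / 2 ^ (p+1) * (Δt ^ (-α) - (tk n) ^ (-α))
        ≤ Δt ^ (p+1) / 2 ^ (p+1) * Δt ^ (-α) := by gcongr; linarith
      _ = (1 / 2 ^ (p+1)) * Δt ^ ((p:ℝ)+1-α) := by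
        rw [sub_eq_add_neg, Real.rpow_add hΔt, ← Real.rpow_natCast]
        push_cast; ring
end

section
/- Let α ∈ (0,1), let a < b be real numbers, and let e : ℝ → ℝ be continuous on [a,b] and continuously differentiable on [a,b) with e(a) = 0. Suppose there exist M ≥ 0 and β > α such that |e(t)| ≤ M (b − t)^β for all t ∈ [a,b], and suppose the function t ↦ e′(t) (b − t)^{−α} is integrable on [a,b]. Then the function t ↦ e(t) (b − t)^{−α−1} is integrable on [a,b] and ∫_a^b e′(t) (b − t)^{−α} dt = −α ∫_a^b e(t) (b − t)^{−α−1} dt. -/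
/-!
On `(a, b)` the product `e t * (b - t) ^ (-α)` is an antiderivative of
`e' t * (b - t) ^ (-α) + α * e t * (b - t) ^ (-α - 1)`. The bound `|e t| ≤ M (b - t) ^ β`
makes the second summand integrable up to `b` (its exponent `β - α - 1` exceeds `-1`) and
sends the product to `0` as `t → b` (its exponent `β - α` is positive), while `e a = 0` kills
it at `a`; the improper fundamental theorem of calculus then gives the identity.
-/

open MeasureTheory Set Filter Topology intervalIntegral

lemma norm_mul_rpow_le_of_abs_le {y s M β γ : ℝ} (hs : 0 < s) (hy : |y| ≤ M * s ^ β) :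
    ‖y * s ^ γ‖ ≤ M * s ^ (β + γ) := by
  rw [Real.norm_eq_abs, abs_mul, abs_of_nonneg (Real.rpow_nonneg hs.le γ), Real.rpow_add hs,
    ← mul_assoc]
  exact mul_le_mul_of_nonneg_right hy (Real.rpow_nonneg hs.le γ)

lemma intervalIntegrable_mul_sub_rpow {e : ℝ → ℝ} {a b M β γ : ℝ} (hab : a ≤ b)
    (he : ContinuousOn e (Ioo a b)) (hbound : ∀ t ∈ Ioo a b, |e t| ≤ M * (b - t) ^ β)
    (hβγ : -1 < β + γ) :
    IntervalIntegrable (fun t => e t * (b - t) ^ γ) volume a b := by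
  rw [intervalIntegrable_iff_integrableOn_Ioo_of_le hab]
  have hdom : IntegrableOn (fun t => M * (b - t) ^ (β + γ)) (Ioo a b) := by
    have h := ((intervalIntegrable_rpow' hβγ (a := 0) (b := b - a)).comp_sub_left b).const_mul M
    simp only [sub_zero, sub_sub_cancel] at h
    exact (intervalIntegrable_iff_integrableOn_Ioo_of_le hab).1 h.symm
  refine hdom.mono' ?_ ((ae_restrict_mem measurableSet_Ioo).mono fun t ht =>
    norm_mul_rpow_le_of_abs_le (sub_pos.2 ht.2) (hbound t ht))
  refine (he.mul ?_).aestronglyMeasurable measurableSet_Ioo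
  exact (continuousOn_const.sub continuousOn_id).rpow_const fun t ht => .inl (sub_pos.2 ht.2).ne'

lemma tendsto_mul_sub_rpow_nhdsLT {e : ℝ → ℝ} {b M β γ : ℝ}
    (hbound : ∀ᶠ t in 𝓝[<] b, |e t| ≤ M * (b - t) ^ β) (hβγ : 0 < β + γ) :
    Tendsto (fun t => e t * (b - t) ^ γ) (𝓝[<] b) (𝓝 0) := by
  have hsub : Tendsto (fun t => b - t) (𝓝[<] b) (𝓝 0) := by
    rw [← sub_self b]
    exact (tendsto_const_nhds.sub tendsto_id).mono_left nhdsWithin_le_nhds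
  have hdom : Tendsto (fun t => M * (b - t) ^ (β + γ)) (𝓝[<] b) (𝓝 0) := by
    simpa using (hsub.rpow_const_nhds_zero hβγ).const_mul M
  refine squeeze_zero_norm' ?_ hdom
  filter_upwards [hbound, self_mem_nhdsWithin] with t ht htb
  exact norm_mul_rpow_le_of_abs_le (sub_pos.2 htb) ht

lemma hasDerivAt_sub_rpow_neg {b α x : ℝ} (hx : x < b) :
    HasDerivAt (fun t => (b - t) ^ (-α)) (α * (b - x) ^ (-α - 1)) x := by
  have h := (Real.hasDerivAt_rpow_const (p := -α) (.inl (sub_pos.2 hx).ne')).comp x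
    ((hasDerivAt_id x).const_sub b)
  exact h.congr_deriv (by ring)

theorem stmt_7_general (α : ℝ) (a b : ℝ) (hab : a < b)
    (e : ℝ → ℝ)
    (he : ContDiffOn ℝ 1 e (Set.Ico a b)) (hea : e a = 0)
    (M β : ℝ) (hβ : α < β)
    (hbound : ∀ t ∈ Set.Icc a b, |e t| ≤ M * (b - t) ^ β)
    (hint : IntervalIntegrable (fun t => derivWithin e (Set.Ico a b) t * (b - t) ^ (-α))
      MeasureTheory.volume a b) :
    IntervalIntegrable (fun t => e t * (b - t) ^ (-α-1)) MeasureTheory.volume a b ∧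
    ∫ t in a..b, derivWithin e (Set.Ico a b) t * (b - t) ^ (-α)
      = -α * ∫ t in a..b, e t * (b - t) ^ (-α-1) := by
  have hcont : ContinuousOn e (Ico a b) := he.continuousOn
  have hsing : IntervalIntegrable (fun t => e t * (b - t) ^ (-α-1)) volume a b :=
    intervalIntegrable_mul_sub_rpow hab.le (hcont.mono Ioo_subset_Ico_self)
      (fun t ht => hbound t (Ioo_subset_Icc_self ht)) (by linarith)
  refine ⟨hsing, ?_⟩
  have hderiv : ∀ x ∈ Ioo a b, HasDerivAt (fun t => e t * (b - t) ^ (-α))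
      (derivWithin e (Ico a b) x * (b - x) ^ (-α) + α * (e x * (b - x) ^ (-α - 1))) x := by
    intro x hx
    have hex := ((he.differentiableOn one_ne_zero x (Ioo_subset_Ico_self hx)).hasDerivWithinAt
      ).hasDerivAt (Ico_mem_nhds hx.1 hx.2)
    exact (hex.mul (hasDerivAt_sub_rpow_neg hx.2)).congr_deriv (by ring)
  have hleft : Tendsto (fun t => e t * (b - t) ^ (-α)) (𝓝[>] a) (𝓝 0) := by
    have hca : ContinuousWithinAt (fun t => e t * (b - t) ^ (-α)) (Ici a) a :=
      (continuousWithinAt_Ico_iff_Ici hab).1 <| (hcont a (left_mem_Ico.2 hab)).mul <|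
        ((continuous_const.sub continuous_id).continuousAt.rpow_const
          (.inl (sub_pos.2 hab).ne')).continuousWithinAt
    simpa [hea] using hca.tendsto.mono_left (nhdsWithin_mono a Ioi_subset_Ici_self)
  have hright : Tendsto (fun t => e t * (b - t) ^ (-α)) (𝓝[<] b) (𝓝 0) :=
    tendsto_mul_sub_rpow_nhdsLT (eventually_of_mem (Ioo_mem_nhdsLT hab) fun t ht =>
      hbound t (Ioo_subset_Icc_self ht)) (by linarith)
  have hftc := integral_eq_sub_of_hasDerivAt_of_tendsto hab hderiv
    (hint.add (hsing.const_mul α)) hleft hright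
  rw [integral_add hint (hsing.const_mul α), intervalIntegral.integral_const_mul] at hftc
  linarith

/-- Integration by parts on the final grid interval `[a,b]`, where the kernel `(b-t)^{-α}`
is singular at the right endpoint: if `e` is continuous on `[a,b]`, continuously
differentiable on `[a,b)`, vanishes at `a`, and `|e(t)| ≤ M (b-t)^β` with `β > α`, and the
integrand `e'(t)(b-t)^{-α}` is integrable, then `t ↦ e(t)(b-t)^{-α-1}` is integrable and
`∫_a^b e'(t)(b-t)^{-α} dt = -α ∫_a^b e(t)(b-t)^{-α-1} dt`. -/
theorem stmt_7 (α : ℝ) (hα : α ∈ Set.Ioo (0:ℝ) 1) (a b : ℝ) (hab : a < b)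
    (e : ℝ → ℝ) (hec : ContinuousOn e (Set.Icc a b))
    (he : ContDiffOn ℝ 1 e (Set.Ico a b)) (hea : e a = 0)
    (M β : ℝ) (hM : 0 ≤ M) (hβ : α < β)
    (hbound : ∀ t ∈ Set.Icc a b, |e t| ≤ M * (b - t) ^ β)
    (hint : IntervalIntegrable (fun t => derivWithin e (Set.Ico a b) t * (b - t) ^ (-α))
      MeasureTheory.volume a b) :
    IntervalIntegrable (fun t => e t * (b - t) ^ (-α-1)) MeasureTheory.volume a b ∧
    ∫ t in a..b, derivWithin e (Set.Ico a b) t * (b - t) ^ (-α)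
      = -α * ∫ t in a..b, e t * (b - t) ^ (-α-1) :=
  stmt_7_general α a b hab e he hea M β hβ hbound hint
end
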